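/- Let X be a measure space with the doubling property, let M be the Hardy–Littlewood maximal operator, and f ∈ L^1 + L^∞. Then (Mf)^*(t) ≤ C f^{**}(t) for all t > 0, where f^* is the decreasing rearrangement and f^{**}(t) = (1/t)∫₀^t f^*(s) ds, with C depending only on the weak-(1,1) and L^∞ bounds of M. -/

import Mathlib

open MeasureTheory Metric Set
open scoped ENNReal NNReal

/-- The decreasing rearrangement of an `ℝ≥0∞`-valued function. -/
noncomputable def decRearrangementE {X : Type} [MeasurableSpace X] (μ : Measure X)
    (f : X → ℝ≥0∞) (t : ℝ) : ℝ≥0∞ :=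
  sInf {l : ℝ≥0∞ | μ {x | l < f x} ≤ ENNReal.ofReal t}

/-- The decreasing rearrangement `f^*(t) = inf { λ : μ({|f| > λ}) ≤ t }`. -/
noncomputable def decRearrangement {X : Type} [MeasurableSpace X] (μ : Measure X)
    (f : X → ℝ) (t : ℝ) : ℝ≥0∞ :=
  decRearrangementE μ (fun x => (‖f x‖₊ : ℝ≥0∞)) t

/-- The maximal decreasing rearrangement `f^{**}(t) = (1/t) ∫₀^t f^*(s) ds`. -/
noncomputable def maxDecRearrangement {X : Type} [MeasurableSpace X] (μ : Measure X)
    (f : X → ℝ) (t : ℝ) : ℝ≥0∞ :=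
  (ENNReal.ofReal t)⁻¹ * ∫⁻ s in Set.Ioo (0 : ℝ) t, decRearrangement μ f s

/-- The (centred) Hardy–Littlewood maximal operator over balls. -/
noncomputable def hlMaximal {X : Type} [MetricSpace X] [MeasurableSpace X]
    (μ : Measure X) (f : X → ℝ) (x : X) : ℝ≥0∞ :=
  ⨆ (r : ℝ) (_ : 0 < r),
    (∫⁻ y in Metric.ball x r, (‖f y‖₊ : ℝ≥0∞) ∂μ) / μ (Metric.ball x r)

/-!
Split `|f|` at the height `a = f^*(t)`: with `G = |f| · 1{|f| > a}` we have `|f| ≤ G + a`, hence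
`Mf ≤ MG + a` and `(Mf)^*(t) ≤ (MG)^*(t) + a`. The Vitali covering lemma (enlargement factor 4,
i.e. three doublings) gives the weak (1,1) bound `λ μ{MG > λ} ≤ K³ ‖G‖₁`, so
`(MG)^*(t) ≤ K³ ‖G‖₁ / t`. Because `μ{|f| > a} ≤ t`, comparing the layer-cake formulas of `G` and
of `f^*` on `(0, t)` level by level gives `‖G‖₁ ≤ ∫₀ᵗ f^*`, and `a ≤ f^{**}(t)` since `f^*`
decreases. Hence `C = K³ + 1` with `K = max Cd 1`.
-/

open Function

theorem lintegral_eq_lintegral_meas_ofReal_lt {α : Type*} [MeasurableSpace α] (μ : Measure α)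
    {F : α → ℝ≥0∞} (hF : AEMeasurable F μ) :
    ∫⁻ x, F x ∂μ = ∫⁻ l in Ioi (0 : ℝ), μ {x | ENNReal.ofReal l < F x} := by
  by_cases htop : μ {x | F x = ∞} = 0
  · have hfin : ∀ᵐ x ∂μ, F x ≠ ∞ := measure_eq_zero_iff_ae_notMem.mp htop
    calc ∫⁻ x, F x ∂μ = ∫⁻ x, ENNReal.ofReal (F x).toReal ∂μ :=
          lintegral_congr_ae (hfin.mono fun x hx => (ENNReal.ofReal_toReal hx).symm)
      _ = ∫⁻ l in Ioi (0 : ℝ), μ {x | l < (F x).toReal} :=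
          lintegral_eq_lintegral_meas_lt μ (ae_of_all _ fun _ => ENNReal.toReal_nonneg)
            hF.ennreal_toReal
      _ = ∫⁻ l in Ioi (0 : ℝ), μ {x | ENNReal.ofReal l < F x} :=
          setLIntegral_congr_fun measurableSet_Ioi fun l hl => measure_congr <|
            hfin.mono fun x hx => propext (ENNReal.ofReal_lt_iff_lt_toReal hl.le hx).symm
  · refine (lintegral_eq_top_of_measure_eq_top_ne_zero hF htop).trans (top_le_iff.mp ?_).symm
    calc ∞ = ∫⁻ _ in Ioi (0 : ℝ), μ {x | F x = ∞} := by
          rw [setLIntegral_const, Real.volume_Ioi, ENNReal.mul_top htop]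
      _ ≤ ∫⁻ l in Ioi (0 : ℝ), μ {x | ENNReal.ofReal l < F x} :=
          lintegral_mono fun l => measure_mono fun x (hx : F x = ∞) => by
            simp [hx, ENNReal.ofReal_lt_top]

theorem tsum_setLIntegral_le_lintegral {ι α : Type*} [MeasurableSpace α] {μ : Measure α}
    {A : ι → Set α} (hA : ∀ i, MeasurableSet (A i)) (hdisj : Pairwise (Disjoint on A))
    (F : α → ℝ≥0∞) : ∑' i, ∫⁻ x in A i, F x ∂μ ≤ ∫⁻ x, F x ∂μ := by
  simp_rw [← withDensity_apply F (hA _)]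
  calc ∑' i, μ.withDensity F (A i) ≤ μ.withDensity F (⋃ i, A i) :=
        tsum_meas_le_meas_iUnion_of_disjoint _ hA hdisj
    _ ≤ μ.withDensity F univ := measure_mono (subset_univ _)
    _ = ∫⁻ x, F x ∂μ := by rw [withDensity_apply _ MeasurableSet.univ, Measure.restrict_univ]

theorem countable_setOf_setLIntegral_pos {ι α : Type*} [MeasurableSpace α] {μ : Measure α}
    {A : ι → Set α} (hA : ∀ i, MeasurableSet (A i)) (hdisj : Pairwise (Disjoint on A))
    {F : α → ℝ≥0∞} (hF : ∫⁻ x, F x ∂μ ≠ ∞) : {i | 0 < ∫⁻ x in A i, F x ∂μ}.Countable := by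
  simp_rw [← withDensity_apply F (hA _)]
  refine Measure.countable_meas_pos_of_disjoint_of_meas_iUnion_ne_top _ hA hdisj
    (ne_top_of_le_ne_top hF ?_)
  rw [← setLIntegral_univ, ← withDensity_apply F MeasurableSet.univ]
  exact measure_mono (subset_univ _)

section Rearrangement

variable {X : Type} [MeasurableSpace X] {μ : Measure X} {g h : X → ℝ≥0∞}

theorem measure_decRearrangementE_lt_le (s : ℝ) :
    μ {x | decRearrangementE μ g s < g x} ≤ ENNReal.ofReal s := by
  set A := {l : ℝ≥0∞ | μ {x | l < g x} ≤ ENNReal.ofReal s}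
  have hA : A.Nonempty := ⟨∞, by simp [A]⟩
  obtain ⟨u, hu_anti, hu_lim, hu_mem⟩ := exists_seq_tendsto_sInf hA (OrderBot.bddBelow A)
  have hunion : {x | sInf A < g x} = ⋃ n, {x | u n < g x} := by
    ext x
    simp only [mem_ofPred_eq, mem_iUnion]
    exact ⟨fun hx => (hu_lim.eventually (gt_mem_nhds hx)).exists,
      fun ⟨n, hn⟩ => (sInf_le (hu_mem n)).trans_lt hn⟩
  have hmono : Monotone fun n => {x | u n < g x} :=
    fun m n hmn x hx => (hu_anti hmn).trans_lt hx
  -- the infimum is attained: `μ {l < g}` is continuous along a sequence `l ↓ sInf A`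
  change μ {x | sInf A < g x} ≤ _
  rw [hunion, hmono.measure_iUnion]
  exact iSup_le hu_mem

theorem decRearrangementE_le_iff {s : ℝ} {l : ℝ≥0∞} :
    decRearrangementE μ g s ≤ l ↔ μ {x | l < g x} ≤ ENNReal.ofReal s :=
  ⟨fun h => (measure_mono fun _ hx => h.trans_lt hx).trans (measure_decRearrangementE_lt_le s),
    fun h => sInf_le h⟩

theorem lt_decRearrangementE_iff {s : ℝ} {l : ℝ≥0∞} :
    l < decRearrangementE μ g s ↔ ENNReal.ofReal s < μ {x | l < g x} := by
  simpa only [not_le] using decRearrangementE_le_iff.not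

theorem antitone_decRearrangementE : Antitone (decRearrangementE μ g) :=
  fun _ _ hst => sInf_le_sInf fun _ hl => hl.trans (ENNReal.ofReal_le_ofReal hst)

theorem decRearrangementE_le_add_of_le_add {a : ℝ≥0∞} (hgh : ∀ x, g x ≤ h x + a) (s : ℝ) :
    decRearrangementE μ g s ≤ decRearrangementE μ h s + a := by
  rw [decRearrangementE, decRearrangementE, ENNReal.sInf_add]
  refine le_iInf₂ fun l (hl : μ {x | l < h x} ≤ _) => sInf_le ?_
  exact (measure_mono fun x (hx : l + a < g x) =>
    lt_of_add_lt_add_right (hx.trans_le (hgh x))).trans hl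

theorem decRearrangementE_mul_le_setLIntegral (t : ℝ) :
    decRearrangementE μ g t * ENNReal.ofReal t ≤
      ∫⁻ s in Ioo 0 t, decRearrangementE μ g s := by
  calc decRearrangementE μ g t * ENNReal.ofReal t
      ≤ decRearrangementE μ g t * volume (Ioo 0 t) := by simp
    _ = ∫⁻ _ in Ioo 0 t, decRearrangementE μ g t := (setLIntegral_const _ _).symm
    _ ≤ ∫⁻ s in Ioo 0 t, decRearrangementE μ g s :=
        setLIntegral_mono' measurableSet_Ioo fun s hs => antitone_decRearrangementE hs.2.le

theorem min_le_volume_lt_decRearrangementE (t : ℝ) (l : ℝ≥0∞) :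
    min (ENNReal.ofReal t) (μ {x | l < g x}) ≤
      volume ({s | l < decRearrangementE μ g s} ∩ Ioo 0 t) := by
  set m := min (ENNReal.ofReal t) (μ {x | l < g x})
  have hm : m ≠ ∞ := ((min_le_left _ _).trans_lt ENNReal.ofReal_lt_top).ne
  calc m = volume (Ioo 0 m.toReal) := by
        rw [Real.volume_Ioo, sub_zero, ENNReal.ofReal_toReal hm]
    _ ≤ _ := measure_mono fun s ⟨hs0, hsm⟩ => by
        have hsm : ENNReal.ofReal s < m := (ENNReal.ofReal_lt_iff_lt_toReal hs0.le hm).mpr hsm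
        exact ⟨lt_decRearrangementE_iff.mpr (hsm.trans_le (min_le_right _ _)), hs0,
          (ENNReal.ofReal_lt_ofReal_iff'.mp (hsm.trans_le (min_le_left _ _))).1⟩

theorem measure_lt_indicator_le_min (t : ℝ) (l : ℝ≥0∞) :
    μ {x | l < {y | decRearrangementE μ g t < g y}.indicator g x} ≤
      min (ENNReal.ofReal t) (μ {x | l < g x}) := by
  refine le_min ((measure_mono fun x (hx : l < _) => ?_).trans
    (measure_decRearrangementE_lt_le (g := g) t))
    (measure_mono fun x (hx : l < _) => show l < g x from hx.trans_le (indicator_le_self _ _ x))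
  exact mem_of_indicator_ne_zero (pos_of_gt hx).ne'

theorem lintegral_indicator_lt_decRearrangementE_le (hg : AEMeasurable g μ) (t : ℝ) :
    ∫⁻ x, {y | decRearrangementE μ g t < g y}.indicator g x ∂μ ≤
      ∫⁻ s in Ioo 0 t, decRearrangementE μ g s := by
  have hG : AEMeasurable ({y | decRearrangementE μ g t < g y}.indicator g) μ :=
    (measurable_id.indicator measurableSet_Ioi).comp_aemeasurable hg
  rw [lintegral_eq_lintegral_meas_ofReal_lt μ hG, lintegral_eq_lintegral_meas_ofReal_lt _
    antitone_decRearrangementE.measurable.aemeasurable]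
  refine lintegral_mono fun l => ?_
  rw [Measure.restrict_apply' measurableSet_Ioo]
  exact (measure_lt_indicator_le_min t _).trans (min_le_volume_lt_decRearrangementE t _)

end Rearrangement

noncomputable def hlMaximalE {X : Type} [MetricSpace X] [MeasurableSpace X]
    (μ : Measure X) (F : X → ℝ≥0∞) (x : X) : ℝ≥0∞ :=
  ⨆ (r : ℝ) (_ : 0 < r), (∫⁻ y in ball x r, F y ∂μ) / μ (ball x r)

section Maximal

variable {X : Type} [MetricSpace X] [MeasurableSpace X] {μ : Measure X} {F G : X → ℝ≥0∞}

theorem hlMaximalE_le_add_of_le_add {a : ℝ≥0∞} (hFG : ∀ x, F x ≤ G x + a) (x : X) :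
    hlMaximalE μ F x ≤ hlMaximalE μ G x + a := by
  refine iSup₂_le fun r hr => ?_
  have hint : ∫⁻ y in ball x r, F y ∂μ ≤ ∫⁻ y in ball x r, G y ∂μ + a * μ (ball x r) :=
    calc ∫⁻ y in ball x r, F y ∂μ ≤ ∫⁻ y in ball x r, G y + a ∂μ := lintegral_mono hFG
      _ = _ := by rw [lintegral_add_right _ measurable_const, setLIntegral_const]
  calc (∫⁻ y in ball x r, F y ∂μ) / μ (ball x r)
      ≤ (∫⁻ y in ball x r, G y ∂μ) / μ (ball x r) + a * μ (ball x r) / μ (ball x r) := by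
        rw [← ENNReal.add_div]; exact ENNReal.div_le_div_right hint _
    _ ≤ hlMaximalE μ G x + a :=
        add_le_add (le_iSup₂ (f := fun r (_ : 0 < r) => (∫⁻ y in ball x r, G y ∂μ) / μ (ball x r))
          r hr) (ENNReal.div_le_of_le_mul le_rfl)

theorem exists_ball_of_lt_hlMaximalE {x : X} {l : ℝ≥0∞} (hl : l < hlMaximalE μ F x) :
    ∃ r, 0 < r ∧ l * μ (ball x r) < ∫⁻ y in ball x r, F y ∂μ := by
  simp only [hlMaximalE, lt_iSup_iff] at hl
  obtain ⟨r, hr, hl⟩ := hl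
  have hμ : μ (ball x r) ≠ 0 := fun h0 => by simp [setLIntegral_measure_zero _ _ h0] at hl
  have hμ' : μ (ball x r) ≠ ∞ := fun h => by simp [h] at hl
  exact ⟨r, hr, (ENNReal.lt_div_iff_mul_lt (Or.inl hμ) (Or.inl hμ')).mp hl⟩

variable {K : ℝ≥0∞} (hd : ∀ (x : X) (r : ℝ), 0 < r → μ (ball x (2 * r)) ≤ K * μ (ball x r))
include hd

theorem measure_closedBall_four_mul_le {x : X} {r : ℝ} (hr : 0 < r) :
    μ (closedBall x (4 * r)) ≤ K ^ 3 * μ (ball x r) :=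
  calc μ (closedBall x (4 * r)) ≤ μ (ball x (2 * (2 * (2 * r)))) :=
        measure_mono (closedBall_subset_ball (by linarith))
    _ ≤ K * (K * (K * μ (ball x r))) :=
        (hd _ _ (by positivity)).trans <| by
          gcongr; exact (hd _ _ (by positivity)).trans (by gcongr; exact hd _ _ hr)
    _ = K ^ 3 * μ (ball x r) := by ring

variable [OpensMeasurableSpace X]

theorem mul_measure_le_of_forall_mem_exists_ball (hK : K ≠ 0) {E : Set X} {R : ℝ} {l : ℝ≥0∞}
    (hE : ∀ x ∈ E, ∃ r, 0 < r ∧ r ≤ R ∧ l * μ (ball x r) < ∫⁻ y in ball x r, F y ∂μ) :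
    l * μ E ≤ K ^ 3 * ∫⁻ y, F y ∂μ := by
  rcases eq_or_ne (∫⁻ y, F y ∂μ) ∞ with hI | hI
  · simp [hI, hK]
  choose! rad hrad_pos hrad_le hrad_good using hE
  obtain ⟨u, huE, hu_disj, hu_cover⟩ :=
    Vitali.exists_disjoint_subfamily_covering_enlargement_closedBall E id rad R hrad_le 4
      (by norm_num)
  have hdisj : Pairwise (Disjoint on fun b : u => ball (b : X) (rad b)) :=
    (hu_disj.mono fun _ => ball_subset_closedBall).subtype
  -- `u` may a priori be uncountable, but each of its disjoint balls carries positive `F`-mass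
  have hcount : u.Countable := by
    have := countable_setOf_setLIntegral_pos (fun _ => measurableSet_ball) hdisj hI
    exact Set.countable_coe_iff.mp <| Set.countable_univ_iff.mp <|
      this.mono fun b _ => pos_of_gt (hrad_good _ (huE b.2))
  have hcover : E ⊆ ⋃ b ∈ u, closedBall b (4 * rad b) := fun x hx => by
    obtain ⟨b, hb, hsub⟩ := hu_cover x hx
    exact mem_biUnion hb (hsub (mem_closedBall_self (hrad_pos x hx).le))
  calc l * μ E ≤ l * ∑' b : u, μ (closedBall (b : X) (4 * rad b)) := by
        gcongr; exact (measure_mono hcover).trans (measure_biUnion_le μ hcount _)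
    _ ≤ l * ∑' b : u, K ^ 3 * μ (ball (b : X) (rad b)) := by
        gcongr with b; exact measure_closedBall_four_mul_le hd (hrad_pos _ (huE b.2))
    _ = K ^ 3 * ∑' b : u, l * μ (ball (b : X) (rad b)) := by
        rw [ENNReal.tsum_mul_left, ENNReal.tsum_mul_left]; ring
    _ ≤ K ^ 3 * ∑' b : u, ∫⁻ y in ball (b : X) (rad b), F y ∂μ := by
        gcongr with b; exact (hrad_good _ (huE b.2)).le
    _ ≤ K ^ 3 * ∫⁻ y, F y ∂μ := by
        gcongr; exact tsum_setLIntegral_le_lintegral (fun _ => measurableSet_ball) hdisj F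

theorem mul_measure_lt_hlMaximalE_le (hK : K ≠ 0) (F : X → ℝ≥0∞) (l : ℝ≥0∞) :
    l * μ {x | l < hlMaximalE μ F x} ≤ K ^ 3 * ∫⁻ y, F y ∂μ := by
  -- Vitali's lemma needs bounded radii, so exhaust by the points having a good ball of radius `≤ n`
  set E : ℕ → Set X :=
    fun n => {x | ∃ r : ℝ, 0 < r ∧ r ≤ n ∧ l * μ (ball x r) < ∫⁻ y in ball x r, F y ∂μ}
  have hE_mono : Monotone E := fun m n hmn x ⟨r, hr, hrm, hx⟩ =>
    ⟨r, hr, hrm.trans (by exact_mod_cast hmn), hx⟩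
  have hsub : {x | l < hlMaximalE μ F x} ⊆ ⋃ n, E n := fun x hx => by
    obtain ⟨r, hr, hx⟩ := exists_ball_of_lt_hlMaximalE hx
    obtain ⟨n, hn⟩ := exists_nat_ge r
    exact mem_iUnion.mpr ⟨n, r, hr, hn, hx⟩
  calc l * μ {x | l < hlMaximalE μ F x} ≤ l * μ (⋃ n, E n) := by gcongr
    _ = ⨆ n, l * μ (E n) := by rw [hE_mono.measure_iUnion, ENNReal.mul_iSup]
    _ ≤ K ^ 3 * ∫⁻ y, F y ∂μ := iSup_le fun n => mul_measure_le_of_forall_mem_exists_ball hd hK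
        fun x hx => hx

theorem decRearrangementE_hlMaximalE_le (hK : K ≠ 0) (F : X → ℝ≥0∞) {t : ℝ} (ht : 0 < t) :
    decRearrangementE μ (hlMaximalE μ F) t ≤ K ^ 3 * (∫⁻ y, F y ∂μ) / ENNReal.ofReal t := by
  refine le_of_forall_gt_imp_ge_of_dense fun l hl => decRearrangementE_le_iff.mpr ?_
  rw [ENNReal.div_lt_iff (Or.inl (ENNReal.ofReal_pos.mpr ht).ne') (Or.inl ENNReal.ofReal_ne_top)]
    at hl
  exact (lt_of_mul_lt_mul_left' ((mul_measure_lt_hlMaximalE_le hd hK F l).trans_lt hl)).le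

end Maximal

/-- On a doubling metric measure space, `(Mf)^*(t) ≤ C f^{**}(t)` for all `t > 0`
and all `f ∈ L¹ + L^∞`. -/
theorem rearrangement_maximal_le_doubleStar (X : Type) [MetricSpace X]
    [MeasurableSpace X] [BorelSpace X] (μ : Measure X)
    (Cd : ℝ≥0∞) (hCd : Cd < ⊤)
    (hdoubling : ∀ (x : X) (r : ℝ), 0 < r → μ (Metric.ball x (2 * r)) ≤ Cd * μ (Metric.ball x r)) :
    ∃ C : ℝ≥0∞, 0 < C ∧ C < ⊤ ∧ ∀ f : X → ℝ, AEStronglyMeasurable f μ →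
      (∃ g h : X → ℝ, f = g + h ∧ MemLp g 1 μ ∧ MemLp h ⊤ μ) →
      ∀ t : ℝ, 0 < t →
        decRearrangementE μ (hlMaximal μ f) t ≤ C * maxDecRearrangement μ f t := by
  set K := max Cd 1
  have hK : K ≠ 0 := (zero_lt_one.trans_le (le_max_right _ _)).ne'
  have hd : ∀ (x : X) (r : ℝ), 0 < r → μ (ball x (2 * r)) ≤ K * μ (ball x r) :=
    fun x r hr => (hdoubling x r hr).trans (by gcongr; exact le_max_left _ _)
  refine ⟨K ^ 3 + 1, by positivity, ENNReal.add_lt_top.mpr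
    ⟨ENNReal.pow_lt_top (max_lt hCd ENNReal.one_lt_top), ENNReal.one_lt_top⟩,
    fun f hf _ t ht => ?_⟩
  set F : X → ℝ≥0∞ := fun x => ‖f x‖₊
  set T := ENNReal.ofReal t
  set a := decRearrangementE μ F t
  set G := {y | a < F y}.indicator F
  set S := ∫⁻ s in Ioo 0 t, decRearrangementE μ F s
  have hFG : ∀ x, F x ≤ G x + a := fun x => by
    by_cases hx : a < F x
    · simp [G, hx]
    · simpa [G, hx] using not_lt.mp hx
  have hG : ∫⁻ x, G x ∂μ ≤ S :=
    lintegral_indicator_lt_decRearrangementE_le hf.aemeasurable.nnnorm.coe_nnreal_ennreal t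
  have ha : a ≤ S / T :=
    ENNReal.le_div_iff_mul_le (Or.inl (ENNReal.ofReal_pos.mpr ht).ne')
      (Or.inl ENNReal.ofReal_ne_top) |>.mpr (decRearrangementE_mul_le_setLIntegral t)
  calc decRearrangementE μ (hlMaximal μ f) t
      ≤ decRearrangementE μ (hlMaximalE μ G) t + a :=
        decRearrangementE_le_add_of_le_add (hlMaximalE_le_add_of_le_add hFG) t
    _ ≤ K ^ 3 * S / T + S / T := by
        gcongr
        exact (decRearrangementE_hlMaximalE_le hd hK G ht).trans (by gcongr)
    _ = (K ^ 3 + 1) * maxDecRearrangement μ f t := by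
        simp only [maxDecRearrangement, decRearrangement, div_eq_mul_inv]; ring
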